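/- If 2k ≤ n, then the dimension of End_{S_n}(Sym^k(ℂⁿ)) equals the number of equivalence classes, under the relation ◊, of set-partitions of {1,...,k} ∪ {1',...,k'}. -/

import Mathlib

/-- Model of the symmetric power `Sym^k(ℂⁿ)`: the free ℂ-module on the basis
indexed by length-`k` partitions with entries in `{1,…,n}`, i.e. size-`k`
multisets from an `n`-element set (basis vector `v_λ = Pi.single λ 1`). -/
abbrev SymV (n k : ℕ) : Type := Sym (Fin n) k → ℂ

/-- The diagonal action of a permutation matrix `σ ∈ S_n ⊆ GL_n(ℂ)` on `Sym^k(ℂⁿ)`: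
the linear map sending the basis vector `v_λ` to `v_{σλ}`, where `σλ` is obtained by
applying `σ` entrywise (and sorting). -/
noncomputable def permAct (n k : ℕ) (σ : Equiv.Perm (Fin n)) : Module.End ℂ (SymV n k) :=
  LinearMap.funLeft ℂ ℂ (Sym.map ⇑σ⁻¹)

/-- The centralizer algebra `End_{S_n}(Sym^k(ℂⁿ))`. -/
noncomputable def centAlg (n k : ℕ) : Subalgebra ℂ (Module.End ℂ (SymV n k)) :=
  Subalgebra.centralizer ℂ (Set.range (permAct n k))

/-- The relation `◊` on set-partitions of `{1,…,k} ⊔ {1',…,k'}` (modeled as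
equivalence relations, i.e. `Setoid`s, on `Fin k ⊕ Fin k`): `𝒮 ◊ 𝒯` iff there are
permutations `α, β ∈ S_k` relabeling the unprimed elements by `α` and the primed
elements by `β`, carrying `𝒮` to `𝒯`. -/
def lozenge (k : ℕ) (S T : Setoid (Fin k ⊕ Fin k)) : Prop :=
  ∃ α β : Equiv.Perm (Fin k),
    ∀ x y : Fin k ⊕ Fin k, S.r x y ↔ T.r (Sum.map α β x) (Sum.map α β y)


set_option synthInstance.maxHeartbeats 1000000
set_option maxHeartbeats 1000000

section PartA


variable (n k : ℕ)

/-- Diagonal `S_n`-orbit relation on pairs of multisets. -/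
def pairRel (p q : Sym (Fin n) k × Sym (Fin n) k) : Prop :=
  ∃ σ : Equiv.Perm (Fin n), Sym.map ⇑σ p.1 = q.1 ∧ Sym.map ⇑σ p.2 = q.2

lemma symmap_inv_cancel (σ : Equiv.Perm (Fin n)) (s : Sym (Fin n) k) :
    Sym.map ⇑σ⁻¹ (Sym.map ⇑σ s) = s := by
  rw [Sym.map_map]
  simp [Sym.map_id']

lemma symmap_cancel_inv (σ : Equiv.Perm (Fin n)) (s : Sym (Fin n) k) :
    Sym.map ⇑σ (Sym.map ⇑σ⁻¹ s) = s := by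
  rw [Sym.map_map]
  simp [Sym.map_id']

lemma pairRel_equiv : Equivalence (pairRel n k) := by
  constructor
  · intro p; exact ⟨1, by simp [Sym.map_id'], by simp [Sym.map_id']⟩
  · rintro p q ⟨σ, h1, h2⟩
    exact ⟨σ⁻¹, by rw [← h1, symmap_inv_cancel], by rw [← h2, symmap_inv_cancel]⟩
  · rintro p q r ⟨σ, h1, h2⟩ ⟨τ, h3, h4⟩
    refine ⟨τ * σ, ?_, ?_⟩
    · rw [← h3, ← h1, Sym.map_map]; rfl
    · rw [← h4, ← h2, Sym.map_map]; rfl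

lemma permAct_apply (σ : Equiv.Perm (Fin n)) (f : SymV n k) (x : Sym (Fin n) k) :
    permAct n k σ f x = f (Sym.map ⇑σ⁻¹ x) := rfl

lemma permAct_single (σ : Equiv.Perm (Fin n)) (y : Sym (Fin n) k) :
    permAct n k σ (Pi.single y 1) = Pi.single (Sym.map ⇑σ y) 1 := by
  funext z
  rw [permAct_apply]
  simp only [Pi.single_apply]
  congr 1
  apply propext
  constructor
  · rintro rfl
    rw [Sym.map_map]; simp [Sym.map_id']
  · rintro rfl
    exact symmap_inv_cancel n k σ y

lemma cent_entry {T : Module.End ℂ (SymV n k)} (hT : T ∈ centAlg n k)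
    (σ : Equiv.Perm (Fin n)) (x y : Sym (Fin n) k) :
    T (Pi.single (Sym.map ⇑σ y) 1) (Sym.map ⇑σ x) = T (Pi.single y 1) x := by
  have h := (Subalgebra.mem_centralizer_iff ℂ).1 hT (permAct n k σ) ⟨σ, rfl⟩
  have h2 : (permAct n k σ * T) (Pi.single y 1) (Sym.map ⇑σ x)
      = (T * permAct n k σ) (Pi.single y 1) (Sym.map ⇑σ x) := by rw [h]
  simp only [Module.End.mul_apply] at h2
  rw [permAct_single] at h2
  rw [permAct_apply, symmap_inv_cancel] at h2
  exact h2.symm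

noncomputable def phi : centAlg n k →ₗ[ℂ] (Quot (pairRel n k) → ℂ) where
  toFun T := Quot.lift (fun p => (T : Module.End ℂ (SymV n k)) (Pi.single p.2 1) p.1)
    (by
      rintro ⟨x, y⟩ ⟨x', y'⟩ ⟨σ, h1, h2⟩
      dsimp only at h1 h2 ⊢
      rw [← h1, ← h2, cent_entry n k T.2 σ])
  map_add' T S := by
    funext q
    induction q using Quot.ind with
    | _ p => simp
  map_smul' c T := by
    funext q
    induction q using Quot.ind with
    | _ p => simp

noncomputable def psiFun (g : Quot (pairRel n k) → ℂ) : Module.End ℂ (SymV n k) where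
  toFun f := fun x => ∑ y : Sym (Fin n) k, g (Quot.mk _ (x, y)) * f y
  map_add' f f' := by
    funext x
    simp [mul_add, Finset.sum_add_distrib]
  map_smul' c f := by
    funext x
    simp [Finset.mul_sum, mul_left_comm]

lemma psiFun_mem (g : Quot (pairRel n k) → ℂ) : psiFun n k g ∈ centAlg n k := by
  show psiFun n k g ∈ Subalgebra.centralizer ℂ (Set.range (permAct n k))
  rw [Subalgebra.mem_centralizer_iff]
  rintro b ⟨σ, rfl⟩
  refine LinearMap.ext fun f => funext fun x => ?_
  simp only [Module.End.mul_apply]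
  rw [permAct_apply]
  show ∑ y : Sym (Fin n) k, g (Quot.mk _ (Sym.map ⇑σ⁻¹ x, y)) * f y
    = ∑ y : Sym (Fin n) k, g (Quot.mk _ (x, y)) * (permAct n k σ f) y
  rw [← Equiv.sum_comp (Sym.equivCongr σ)
    (fun y => g (Quot.mk _ (x, y)) * (permAct n k σ f) y)]
  refine Finset.sum_congr rfl fun y _ => ?_
  have h1 : (Sym.equivCongr σ) y = Sym.map ⇑σ y := rfl
  rw [h1, permAct_apply, symmap_inv_cancel]
  congr 1
  apply congrArg
  apply Quot.sound
  exact ⟨σ, by dsimp only; rw [symmap_cancel_inv], rfl⟩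

noncomputable def psi : (Quot (pairRel n k) → ℂ) →ₗ[ℂ] centAlg n k where
  toFun g := ⟨psiFun n k g, psiFun_mem n k g⟩
  map_add' g g' := by
    apply Subtype.ext
    refine LinearMap.ext fun f => funext fun x => ?_
    show ∑ y : Sym (Fin n) k, _ = _
    simp [psiFun, add_mul, Finset.sum_add_distrib]
  map_smul' c g := by
    apply Subtype.ext
    refine LinearMap.ext fun f => funext fun x => ?_
    show ∑ y : Sym (Fin n) k, _ = _
    simp [psiFun, Finset.mul_sum, mul_assoc]

lemma phi_psi (g : Quot (pairRel n k) → ℂ) : phi n k (psi n k g) = g := by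
  funext q
  induction q using Quot.ind with
  | _ p =>
    obtain ⟨x, y⟩ := p
    show ∑ y' : Sym (Fin n) k, g (Quot.mk _ (x, y')) * (Pi.single y 1 : SymV n k) y' = _
    simp only [Pi.single_apply, mul_ite, mul_one, mul_zero]
    rw [Finset.sum_ite_eq' Finset.univ y (fun y' => g (Quot.mk _ (x, y')))]
    simp

lemma psi_phi (T : centAlg n k) : psi n k (phi n k T) = T := by
  apply Subtype.ext
  refine LinearMap.ext fun f => funext fun x => ?_
  show ∑ y : Sym (Fin n) k, (T : Module.End ℂ (SymV n k)) (Pi.single y 1) x * f y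
    = (T : Module.End ℂ (SymV n k)) f x
  conv_rhs => rw [← Finset.univ_sum_single f]
  rw [map_sum, Finset.sum_apply]
  refine Finset.sum_congr rfl fun y _ => ?_
  have hs : (Pi.single y (f y) : SymV n k) = f y • (Pi.single y 1 : SymV n k) := by
    funext z
    simp [Pi.single_apply]
  rw [hs, map_smul]
  simp [mul_comm]

noncomputable def centEquiv : centAlg n k ≃ₗ[ℂ] (Quot (pairRel n k) → ℂ) :=
  LinearEquiv.ofLinear (phi n k) (psi n k)
    (LinearMap.ext fun g => phi_psi n k g) (LinearMap.ext fun T => psi_phi n k T)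

lemma finrank_centAlg_eq : Module.finrank ℂ (centAlg n k) = Nat.card (Quot (pairRel n k)) := by
  classical
  have : Fintype (Quot (pairRel n k)) := Fintype.ofFinite _
  rw [(centEquiv n k).finrank_eq, Module.finrank_pi, Nat.card_eq_fintype_card]

end PartA

section PartB


variable {n k : ℕ}

/-- The size-`k` multiset associated to a `k`-tuple. -/
def symOf (g : Fin k → Fin n) : Sym (Fin n) k :=
  ⟨Multiset.map g Finset.univ.val, by simp⟩

lemma symOf_val (g : Fin k → Fin n) : (symOf g).val = (List.ofFn g : Multiset (Fin n)) := by
  show Multiset.map g Finset.univ.val = _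
  rw [Fin.univ_def]
  show Multiset.map g (List.finRange k : Multiset (Fin k)) = _
  rw [Multiset.map_coe, List.ofFn_eq_map]

lemma map_symOf (σ : Fin n → Fin n) (g : Fin k → Fin n) :
    Sym.map σ (symOf g) = symOf (σ ∘ g) := by
  apply Subtype.ext
  show Multiset.map σ (Multiset.map g Finset.univ.val) = Multiset.map (σ ∘ g) Finset.univ.val
  rw [Multiset.map_map]

lemma symOf_eq_iff (g g' : Fin k → Fin n) :
    symOf g = symOf g' ↔ ∃ σ : Equiv.Perm (Fin k), g ∘ ⇑σ = g' := by
  constructor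
  · intro hgg
    have hperm : (List.ofFn g).Perm (List.ofFn g') := by
      rw [← Multiset.coe_eq_coe, ← symOf_val, ← symOf_val, hgg]
    have h1 : Monotone (g ∘ Tuple.sort g) := Tuple.monotone_sort g
    have h2 : Monotone (g' ∘ Tuple.sort g') := Tuple.monotone_sort g'
    have heq : g ∘ Tuple.sort g = g' ∘ Tuple.sort g' := by
      apply List.ofFn_inj.1
      exact List.Perm.eq_of_sortedLE h1.sortedLE_ofFn h2.sortedLE_ofFn
        (((Tuple.sort g).ofFn_comp_perm g).trans
          (hperm.trans ((Tuple.sort g').ofFn_comp_perm g').symm))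
    refine ⟨Tuple.sort g * (Tuple.sort g')⁻¹, funext fun i => ?_⟩
    have := congrFun heq ((Tuple.sort g')⁻¹ i)
    simpa using this
  · rintro ⟨σ, rfl⟩
    apply Subtype.ext
    rw [symOf_val, symOf_val]
    exact Multiset.coe_eq_coe.2 (σ.ofFn_comp_perm g).symm

lemma exists_symOf (s : Sym (Fin n) k) : ∃ g : Fin k → Fin n, symOf g = s := by
  have hl : s.val.toList.length = k := by
    rw [Multiset.length_toList]; exact s.2
  refine ⟨fun i => s.val.toList.get (Fin.cast hl.symm i), ?_⟩
  apply Subtype.ext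
  rw [symOf_val]
  have : List.ofFn (fun i : Fin k => s.val.toList.get (Fin.cast hl.symm i)) = s.val.toList := by
    apply List.ext_get
    · simp [hl]
    · intro i h1 h2
      simp [List.get_ofFn]
      rfl
  rw [this, Multiset.coe_toList]

/-- Extend a fiber-compatible pair of maps to a permutation of the target. -/
lemma exists_perm_comp {Y : Type*} [Fintype Y] (f f' : Y → Fin n)
    (hff' : ∀ x y, f x = f y ↔ f' x = f' y) :
    ∃ σ : Equiv.Perm (Fin n), ⇑σ ∘ f = f' := by
  classical
  let u : Set.range f → Set.range f' := fun a => ⟨f' a.2.choose, Set.mem_range_self _⟩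
  have hu1 : ∀ (x : Y), u ⟨f x, Set.mem_range_self x⟩ = ⟨f' x, Set.mem_range_self x⟩ := by
    intro x
    apply Subtype.ext
    show f' _ = f' x
    rw [← hff']
    exact (Set.mem_range_self (f := f) x).choose_spec
  have hu_inj : Function.Injective u := by
    rintro ⟨a, x, rfl⟩ ⟨b, y, rfl⟩ hab
    rw [hu1 x, hu1 y] at hab
    apply Subtype.ext
    show f x = f y
    rw [hff']
    exact congrArg Subtype.val hab
  have hu_surj : Function.Surjective u := by
    rintro ⟨b, y, rfl⟩
    exact ⟨⟨f y, Set.mem_range_self y⟩, hu1 y⟩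
  let e1 : Set.range f ≃ Set.range f' := Equiv.ofBijective u ⟨hu_inj, hu_surj⟩
  have hcard : Fintype.card (↥(Set.range f)ᶜ) = Fintype.card (↥(Set.range f')ᶜ) := by
    rw [Fintype.card_compl_set, Fintype.card_compl_set, Fintype.card_congr e1]
  let e2 := Fintype.equivOfCardEq hcard
  refine ⟨(Equiv.Set.sumCompl (Set.range f)).symm.trans
    ((e1.sumCongr e2).trans (Equiv.Set.sumCompl (Set.range f'))), funext fun x => ?_⟩
  show (Equiv.Set.sumCompl _) ((e1.sumCongr e2) ((Equiv.Set.sumCompl _).symm (f x))) = f' x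
  rw [Equiv.Set.sumCompl_symm_apply_of_mem (Set.mem_range_self x)]
  show (Equiv.Set.sumCompl _) (Sum.inl (e1 ⟨f x, Set.mem_range_self x⟩)) = f' x
  show (Equiv.Set.sumCompl _) (Sum.inl (u ⟨f x, Set.mem_range_self x⟩)) = f' x
  rw [hu1 x]
  exact Equiv.Set.sumCompl_apply_inl (Set.range f') _

lemma exists_emb (h2 : 2 * k ≤ n) (S : Setoid (Fin k ⊕ Fin k)) :
    Nonempty (Quotient S ↪ Fin n) := by
  classical
  apply Function.Embedding.nonempty_of_card_le
  calc Fintype.card (Quotient S) ≤ Fintype.card (Fin k ⊕ Fin k) :=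
        Fintype.card_le_of_surjective _ (Quotient.mk''_surjective)
    _ ≤ Fintype.card (Fin n) := by simp [Fintype.card_sum]; omega

/-- A choice of "block labeling" function whose fibers are the blocks of `S`. -/
noncomputable def bf (h2 : 2 * k ≤ n) (S : Setoid (Fin k ⊕ Fin k)) :
    (Fin k ⊕ Fin k) → Fin n :=
  fun x => (exists_emb h2 S).some (Quotient.mk S x)

lemma bf_eq_iff (h2 : 2 * k ≤ n) (S : Setoid (Fin k ⊕ Fin k)) (x y : Fin k ⊕ Fin k) :
    bf h2 S x = bf h2 S y ↔ S.r x y := by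
  unfold bf
  rw [(exists_emb h2 S).some.injective.eq_iff]
  exact Quotient.eq

/-- The pair of multisets associated to a set-partition of `Fin k ⊕ Fin k`. -/
noncomputable def toPair (h2 : 2 * k ≤ n) (S : Setoid (Fin k ⊕ Fin k)) :
    Sym (Fin n) k × Sym (Fin n) k :=
  (symOf (bf h2 S ∘ Sum.inl), symOf (bf h2 S ∘ Sum.inr))

lemma toPair_descend (h2 : 2 * k ≤ n) {S T : Setoid (Fin k ⊕ Fin k)}
    (hST : lozenge k S T) : pairRel n k (toPair h2 S) (toPair h2 T) := by
  obtain ⟨α, β, hiff⟩ := hST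
  set m : (Fin k ⊕ Fin k) → (Fin k ⊕ Fin k) := Sum.map ⇑α ⇑β with hm
  have hfib : ∀ x y, bf h2 S x = bf h2 S y ↔ (bf h2 T ∘ m) x = (bf h2 T ∘ m) y := by
    intro x y
    rw [bf_eq_iff, Function.comp_apply, Function.comp_apply, bf_eq_iff]
    exact hiff x y
  obtain ⟨σ, hσ⟩ := exists_perm_comp _ _ hfib
  refine ⟨σ, ?_, ?_⟩
  · show Sym.map ⇑σ (symOf (bf h2 S ∘ Sum.inl)) = symOf (bf h2 T ∘ Sum.inl)
    rw [map_symOf]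
    have : ⇑σ ∘ (bf h2 S ∘ Sum.inl) = (bf h2 T ∘ Sum.inl) ∘ ⇑α := by
      funext i
      exact congrFun hσ (Sum.inl i)
    rw [this]
    exact ((symOf_eq_iff _ _).2 ⟨α, rfl⟩).symm
  · show Sym.map ⇑σ (symOf (bf h2 S ∘ Sum.inr)) = symOf (bf h2 T ∘ Sum.inr)
    rw [map_symOf]
    have : ⇑σ ∘ (bf h2 S ∘ Sum.inr) = (bf h2 T ∘ Sum.inr) ∘ ⇑β := by
      funext i
      exact congrFun hσ (Sum.inr i)
    rw [this]
    exact ((symOf_eq_iff _ _).2 ⟨β, rfl⟩).symm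

noncomputable def bigG (h2 : 2 * k ≤ n) : Quot (lozenge k) → Quot (pairRel n k) :=
  Quot.lift (fun S => Quot.mk _ (toPair h2 S))
    (fun _ _ hST => Quot.sound (toPair_descend h2 hST))

lemma bigG_surj (h2 : 2 * k ≤ n) : Function.Surjective (bigG h2) := by
  rintro q
  obtain ⟨⟨s, t⟩, rfl⟩ := Quot.exists_rep q
  obtain ⟨g, hg⟩ := exists_symOf s
  obtain ⟨g', hg'⟩ := exists_symOf t
  set f : (Fin k ⊕ Fin k) → Fin n := Sum.elim g g' with hf
  set S : Setoid (Fin k ⊕ Fin k) := Setoid.ker f with hS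
  refine ⟨Quot.mk _ S, ?_⟩
  show Quot.mk _ (toPair h2 S) = Quot.mk _ (s, t)
  apply Quot.sound
  have hfib : ∀ x y, bf h2 S x = bf h2 S y ↔ f x = f y := by
    intro x y
    rw [bf_eq_iff]
    exact Iff.rfl
  obtain ⟨σ, hσ⟩ := exists_perm_comp _ _ hfib
  refine ⟨σ, ?_, ?_⟩
  · show Sym.map ⇑σ (symOf (bf h2 S ∘ Sum.inl)) = s
    rw [map_symOf, ← Function.comp_assoc, hσ]
    rw [← hg]
    rfl
  · show Sym.map ⇑σ (symOf (bf h2 S ∘ Sum.inr)) = t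
    rw [map_symOf, ← Function.comp_assoc, hσ]
    rw [← hg']
    rfl

lemma bigG_inj (h2 : 2 * k ≤ n) : Function.Injective (bigG h2) := by
  intro a b
  obtain ⟨S, rfl⟩ := Quot.exists_rep a
  obtain ⟨T, rfl⟩ := Quot.exists_rep b
  intro hab
  have hrel : pairRel n k (toPair h2 S) (toPair h2 T) :=
    ((pairRel_equiv n k).eqvGen_iff).1 (Quot.eqvGen_exact hab)
  obtain ⟨σ, hσ1, hσ2⟩ := hrel
  apply Quot.sound
  rw [show (toPair h2 S).1 = symOf (bf h2 S ∘ Sum.inl) from rfl,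
    show (toPair h2 T).1 = symOf (bf h2 T ∘ Sum.inl) from rfl, map_symOf] at hσ1
  rw [show (toPair h2 S).2 = symOf (bf h2 S ∘ Sum.inr) from rfl,
    show (toPair h2 T).2 = symOf (bf h2 T ∘ Sum.inr) from rfl, map_symOf] at hσ2
  obtain ⟨α, hα⟩ := (symOf_eq_iff _ _).1 hσ1
  obtain ⟨β, hβ⟩ := (symOf_eq_iff _ _).1 hσ2
  refine ⟨α⁻¹, β⁻¹, fun x y => ?_⟩
  have key : ∀ z : Fin k ⊕ Fin k, bf h2 T (Sum.map ⇑α⁻¹ ⇑β⁻¹ z) = σ (bf h2 S z) := by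
    rintro (i | j)
    · have := congrFun hα (α⁻¹ i)
      simp only [Function.comp_apply, Equiv.Perm.inv_def, Equiv.apply_symm_apply] at this ⊢
      rw [Sum.map_inl, ← this]
    · have := congrFun hβ (β⁻¹ j)
      simp only [Function.comp_apply, Equiv.Perm.inv_def, Equiv.apply_symm_apply] at this ⊢
      rw [Sum.map_inr, ← this]
  rw [← bf_eq_iff h2 S x y, ← bf_eq_iff h2 T, key x, key y, σ.injective.eq_iff]

lemma card_eq (h2 : 2 * k ≤ n) :
    Nat.card (Quot (pairRel n k)) = Nat.card (Quot (lozenge k)) :=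
  (Nat.card_eq_of_bijective (bigG h2) ⟨bigG_inj h2, bigG_surj h2⟩).symm

end PartB

/-- If `2k ≤ n`, the dimension of `End_{S_n}(Sym^k(ℂⁿ))` equals the number of
`◊`-equivalence classes of set-partitions of `{1,…,k} ⊔ {1',…,k'}`. -/
theorem finrank_centAlg_eq_card_lozenge_classes (n k : ℕ) (h : 2 * k ≤ n) :
    Module.finrank ℂ (centAlg n k) = Nat.card (Quot (lozenge k)) := by
  rw [finrank_centAlg_eq n k, card_eq h]
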